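/- Let loss, reg : ℝ → ℝ be convex and Lipschitz, and suppose both are coercive in the sense that loss(x) − loss(0) ≥ a_loss·|x| − b_loss and reg(x) − reg(0) ≥ a_reg·|x| − b_reg for all x ∈ ℝ, with a_loss, a_reg > 0 and b_loss, b_reg ≥ 0. Then there exist positive constants C₁ and C₂, depending only on δ, loss, reg, and the laws of Z and X, such that Lcal(v,w) ≥ C₁·(‖v‖ + ‖w‖) − C₂ for every (v,w) ∈ ℋ with Gcal(v,w) ≤ 0. -/

import Mathlib

open MeasureTheory ProbabilityTheory Real Set Filter

noncomputable section

def subderiv (f : ℝ → ℝ) (x : ℝ) : Set ℝ :=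
  {g : ℝ | ∀ y : ℝ, f x + g * (y - x) ≤ f y}

def moreau (f : ℝ → ℝ) (τ x : ℝ) : ℝ :=
  ⨅ u : ℝ, ((x - u) ^ 2 / (2 * τ) + f u)

def prox (τ : ℝ) (f : ℝ → ℝ) (x : ℝ) : ℝ :=
  Classical.epsilon fun u : ℝ =>
    ∀ y : ℝ, τ * f u + (x - u) ^ 2 / 2 ≤ τ * f y + (x - y) ^ 2 / 2

def nu (ζ : Measure ℝ) : Measure (ℝ × ℝ) :=
  (gaussianReal 0 1).prod ζ

def argminIsZero (f : ℝ → ℝ) : Prop :=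
  {x : ℝ | ∀ y : ℝ, f x ≤ f y} = {0}

def LipschitzFun (f : ℝ → ℝ) : Prop := ∃ K : NNReal, LipschitzWith K f

def Lfun (ζ : Measure ℝ) (loss : ℝ → ℝ) (c τ : ℝ) : ℝ :=
  ∫ p : ℝ × ℝ, (moreau loss τ (c * p.1 + p.2) - loss p.2) ∂(nu ζ)

def inH (ζ : Measure ℝ) (v : ℝ × ℝ → ℝ) : Prop :=
  MemLp v 2 (nu ζ)

def hnorm (ζ : Measure ℝ) (v : ℝ × ℝ → ℝ) : ℝ :=
  Real.sqrt (∫ p : ℝ × ℝ, (v p) ^ 2 ∂(nu ζ))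

/-- `R(c, τ) = E[env_reg(c·H + X; τ) − reg(X)]`. -/
def Rfun (ξ : Measure ℝ) (reg : ℝ → ℝ) (c τ : ℝ) : ℝ :=
  ∫ q : ℝ × ℝ, (moreau reg τ (c * q.1 + q.2) - reg q.2) ∂(nu ξ)

/-- Regularized potential `M(α)`. -/
def MpotR (ζ ξ : Measure ℝ) (loss reg : ℝ → ℝ) (δ α : ℝ) : ℝ :=
  if α = 0 then
    ⨆ β : Ioi (0:ℝ), ⨅ τg : Ioi (0:ℝ),
      ((β : ℝ) * (τg : ℝ) / 2 + δ * Lfun ζ loss 0 ((τg : ℝ) / (β : ℝ)))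
  else
    ⨆ bt : Ioi (0:ℝ) × Ioi (0:ℝ), ⨅ τg : Ioi (0:ℝ),
      ((bt.1 : ℝ) * (τg : ℝ) / 2 + δ * Lfun ζ loss α ((τg : ℝ) / (bt.1 : ℝ))
        - α * (bt.2 : ℝ) / 2 - α * (bt.1 : ℝ) ^ 2 / (2 * (bt.2 : ℝ))
        + Rfun ξ reg (α * (bt.1 : ℝ) / (bt.2 : ℝ)) (α / (bt.2 : ℝ)))

/-- `Lcal(v, w) = δ·E[loss(v+Z) − loss(Z)] + E[reg(w+X) − reg(X)]`. -/
def LcalR (ζ ξ : Measure ℝ) (loss reg : ℝ → ℝ) (δ : ℝ) (v w : ℝ × ℝ → ℝ) : ℝ :=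
  δ * (∫ p : ℝ × ℝ, (loss (v p + p.2) - loss p.2) ∂(nu ζ)) +
    ∫ q : ℝ × ℝ, (reg (w q + q.2) - reg q.2) ∂(nu ξ)

/-- `E[v·G]`. -/
def evG (ζ : Measure ℝ) (v : ℝ × ℝ → ℝ) : ℝ := ∫ p : ℝ × ℝ, v p * p.1 ∂(nu ζ)

/-- Projection `Π(v) = v − E[vG]·G` onto the orthogonal complement of `G`. -/
def projPerp (ζ : Measure ℝ) (v : ℝ × ℝ → ℝ) : ℝ × ℝ → ℝ :=
  fun p => v p - evG ζ v * p.1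

/-- `T(v,w) = {(‖w‖ − E[vG])₊² + E[Π(v)²]}^{1/2}`. -/
def Tfun (ζ ξ : Measure ℝ) (v w : ℝ × ℝ → ℝ) : ℝ :=
  Real.sqrt ((max (hnorm ξ w - evG ζ v) 0) ^ 2 +
    ∫ p : ℝ × ℝ, (projPerp ζ v p) ^ 2 ∂(nu ζ))

/-- `Gcal(v,w) = T(v,w) − δ^{-1/2}·E[Hw]`. -/
def GcalR (ζ ξ : Measure ℝ) (δ : ℝ) (v w : ℝ × ℝ → ℝ) : ℝ :=
  Tfun ζ ξ v w - (∫ q : ℝ × ℝ, w q * q.1 ∂(nu ξ)) / Real.sqrt δ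

/-- `(v, w)` solves `min_{(v,w) ∈ ℋ, Gcal(v,w) ≤ 0} Lcal(v,w)`. -/
def SolvesConstrainedR (ζ ξ : Measure ℝ) (loss reg : ℝ → ℝ) (δ : ℝ) (v w : ℝ × ℝ → ℝ) : Prop :=
  inH ζ v ∧ inH ξ w ∧ GcalR ζ ξ δ v w ≤ 0 ∧
    ∀ u s : ℝ × ℝ → ℝ, inH ζ u → inH ξ s → GcalR ζ ξ δ u s ≤ 0 →
      LcalR ζ ξ loss reg δ v w ≤ LcalR ζ ξ loss reg δ u s

/-- Subdifferential of a functional on the product Hilbert space `ℋ = H_Z × H_X`. -/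
def subdiffHR (ζ ξ : Measure ℝ) (F : (ℝ × ℝ → ℝ) → (ℝ × ℝ → ℝ) → ℝ) (v w : ℝ × ℝ → ℝ) :
    Set ((ℝ × ℝ → ℝ) × (ℝ × ℝ → ℝ)) :=
  {gh | inH ζ gh.1 ∧ inH ξ gh.2 ∧ ∀ u s : ℝ × ℝ → ℝ, inH ζ u → inH ξ s →
    F v w + (∫ p : ℝ × ℝ, gh.1 p * (u p - v p) ∂(nu ζ)) +
      (∫ q : ℝ × ℝ, gh.2 q * (s q - w q) ∂(nu ξ)) ≤ F u s}

/-- KKT condition at `(v, w)` with multiplier `μ`. -/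
def KKTR (ζ ξ : Measure ℝ) (loss reg : ℝ → ℝ) (δ μ : ℝ) (v w : ℝ × ℝ → ℝ) : Prop :=
  (∃ gh ∈ subdiffHR ζ ξ (GcalR ζ ξ δ) v w,
      ((fun p => -μ * gh.1 p), (fun q => -μ * gh.2 q)) ∈
        subdiffHR ζ ξ (LcalR ζ ξ loss reg δ) v w) ∧
    μ * GcalR ζ ξ δ v w = 0 ∧ GcalR ζ ξ δ v w ≤ 0

/-- The four-equation nonlinear system with unknowns `(α, β, κ, ν)`. -/
def solvesSystemR (ζ ξ : Measure ℝ) (loss reg : ℝ → ℝ) (δ α β κ ν : ℝ) : Prop :=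
  α ^ 2 = (∫ q : ℝ × ℝ, (prox ν⁻¹ reg (ν⁻¹ * β * q.1 + q.2) - q.2) ^ 2 ∂(nu ξ)) ∧
  δ⁻¹ * β ^ 2 * κ ^ 2 =
      (∫ p : ℝ × ℝ, (α * p.1 + p.2 - prox κ loss (α * p.1 + p.2)) ^ 2 ∂(nu ζ)) ∧
  δ⁻¹ * ν * α * κ =
      (∫ p : ℝ × ℝ, p.1 * (α * p.1 + p.2 - prox κ loss (α * p.1 + p.2)) ∂(nu ζ)) ∧
  κ * β = (∫ q : ℝ × ℝ, q.1 * (prox ν⁻¹ reg (ν⁻¹ * β * q.1 + q.2) - q.2) ∂(nu ξ))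

/-- Threshold `δ_perfect` for the regularized problem. -/
def deltaPerfectR (ζ ξ : Measure ℝ) (loss reg : ℝ → ℝ) : ENNReal :=
  ENNReal.ofReal (⨅ t : Ioi (0:ℝ),
      ∫ q : ℝ × ℝ, (Metric.infDist q.1 ((fun g => (t : ℝ) * g) '' subderiv reg q.2)) ^ 2 ∂(nu ξ)) /
  ENNReal.ofReal
    (1 - ⨅ t : Ioi (0:ℝ),
      ∫ p : ℝ × ℝ, (Metric.infDist p.1 ((fun g => (t : ℝ) * g) '' subderiv loss p.2)) ^ 2 ∂(nu ζ))

/-- Either `reg` is differentiable, or it has finitely many nondifferentiable points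
and `X` is unbounded. -/
def regCondition (ξ : Measure ℝ) (reg : ℝ → ℝ) : Prop :=
  (∀ x : ℝ, DifferentiableAt ℝ reg x) ∨
    ({x : ℝ | ¬ DifferentiableAt ℝ reg x}.Finite ∧ ∀ M : ℝ, 0 < M → 0 < ξ {x : ℝ | M < |x|})

/-!
Coercivity of `loss` gives `loss (v + Z) - loss Z ≥ a_loss |v| - const` where `|Z|` is bounded,
and Lipschitz continuity gives `≥ -K |v|` on the rare event where `|Z|` is large; hence
`Lcal(v, w) ≥ δ a_loss E|v| + a_reg E|w| - ε (‖v‖ + ‖w‖) - C_ε` for every `ε > 0`.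
The constraint `Gcal(v, w) ≤ 0` turns these `L¹` norms back into `L²` norms: it bounds both
`‖Π v‖` and `‖w‖ - E[vG]` by `δ^{-1/2} E[Hw]`, while truncating a Gaussian factor at a level `M`
gives `|E[u G]| ≤ M E|u| + ε ‖u‖`. Together with `‖v‖ ≤ ‖Π v‖ + |E[vG]|` this yields
`‖v‖ + ‖w‖ ≤ A (E|v| + E|w|)` on the constraint set, and taking `ε` small compared with `1 / A`
concludes.
-/

open Topology
open scoped NNReal

section SquareIntegrable

variable {α : Type*} [MeasurableSpace α] {μ : Measure α} {f g : α → ℝ}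

lemma integral_abs_mul_le_sqrt_mul_sqrt (hf : MemLp f 2 μ) (hg : MemLp g 2 μ) :
    ∫ x, |f x * g x| ∂μ ≤ √(∫ x, f x ^ 2 ∂μ) * √(∫ x, g x ^ 2 ∂μ) := by
  have h := integral_mul_norm_le_Lp_mul_Lq .two_two (by simpa using hf) (by simpa using hg)
  simp only [Real.norm_eq_abs, ← abs_mul] at h
  have hsq : ∀ x : ℝ, |x| ^ (2 : ℝ) = x ^ 2 := fun x => by norm_cast; exact sq_abs x
  simpa only [hsq, Real.sqrt_eq_rpow] using h

lemma integral_mul_le_sqrt_mul_sqrt (hf : MemLp f 2 μ) (hg : MemLp g 2 μ) :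
    ∫ x, f x * g x ∂μ ≤ √(∫ x, f x ^ 2 ∂μ) * √(∫ x, g x ^ 2 ∂μ) :=
  (integral_mono (hf.integrable_mul hg) (hf.integrable_mul hg).abs fun _ => le_abs_self _).trans
    (integral_abs_mul_le_sqrt_mul_sqrt hf hg)

lemma sqrt_integral_add_sq_le (hf : MemLp f 2 μ) (hg : MemLp g 2 μ) :
    √(∫ x, (f x + g x) ^ 2 ∂μ) ≤ √(∫ x, f x ^ 2 ∂μ) + √(∫ x, g x ^ 2 ∂μ) := by
  have hfg : Integrable (fun x => 2 * (f x * g x)) μ := (hf.integrable_mul hg).const_mul 2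
  have hexpand : ∫ x, (f x + g x) ^ 2 ∂μ
      = ∫ x, f x ^ 2 ∂μ + 2 * ∫ x, f x * g x ∂μ + ∫ x, g x ^ 2 ∂μ := by
    simp_rw [add_sq', mul_assoc]
    have hsq : Integrable (fun x => f x ^ 2 + g x ^ 2) μ := hf.integrable_sq.add hg.integrable_sq
    rw [integral_add hsq hfg, integral_add hf.integrable_sq hg.integrable_sq, integral_const_mul]
    ring
  refine Real.sqrt_le_iff.2 ⟨by positivity, ?_⟩
  rw [hexpand, add_sq, Real.sq_sqrt (integral_nonneg fun _ => sq_nonneg _),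
    Real.sq_sqrt (integral_nonneg fun _ => sq_nonneg _)]
  linarith [integral_mul_le_sqrt_mul_sqrt hf hg]

lemma sqrt_integral_const_mul_sq (c : ℝ) (f : α → ℝ) :
    √(∫ x, (c * f x) ^ 2 ∂μ) = |c| * √(∫ x, f x ^ 2 ∂μ) := by
  simp_rw [mul_pow, integral_const_mul]
  rw [Real.sqrt_mul (sq_nonneg c), Real.sqrt_sq_eq_abs]

lemma exists_measureReal_abs_gt_le [IsFiniteMeasure μ] {Z : α → ℝ} (hZ : Measurable Z) {ε : ℝ}
    (hε : 0 < ε) : ∃ T, 0 ≤ T ∧ μ.real {x | T < |Z x|} ≤ ε := by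
  have hlim : Tendsto (fun T : ℝ => μ {x | T < |Z x|}) atTop (𝓝 0) := by
    have h := tendsto_measure_iInter_atTop (μ := μ) (s := fun T : ℝ => {x | T < |Z x|})
      (fun T => (measurableSet_lt measurable_const hZ.abs).nullMeasurableSet)
      (fun T T' hTT' x hx => lt_of_le_of_lt hTT' hx) ⟨0, measure_ne_top μ _⟩
    have hempty : ⋂ T : ℝ, {x | T < |Z x|} = ∅ :=
      eq_empty_of_forall_notMem fun x hx => lt_irrefl |Z x| (mem_iInter.1 hx |Z x|)
    rwa [hempty, measure_empty] at h
  obtain ⟨T, hT0, hT⟩ :=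
    ((eventually_ge_atTop 0).and (hlim.eventually (gt_mem_nhds (ENNReal.ofReal_pos.2 hε)))).exists
  exact ⟨T, hT0, ENNReal.toReal_le_of_le_ofReal hε.le hT.le⟩

lemma exists_integral_indicator_sq_le (hg : MemLp g 2 μ) {ε : ℝ} (hε : 0 < ε) :
    ∃ M, 0 ≤ M ∧ ∫ x, {x | M < |g x|}.indicator (fun x => g x ^ 2) x ∂μ ≤ ε := by
  have hlim : Tendsto (fun M : ℝ => ∫ x, {x | M < |g x|}.indicator (fun x => g x ^ 2) x ∂μ)
      atTop (𝓝 0) := by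
    have h := tendsto_integral_filter_of_dominated_convergence (μ := μ) (l := atTop)
      (F := fun M : ℝ => {x | M < |g x|}.indicator (fun x => g x ^ 2)) (f := 0)
      (fun x => g x ^ 2) ?_ ?_ hg.integrable_sq ?_
    · simpa using h
    · exact .of_forall fun M => (hg.integrable_sq.indicator₀
        (nullMeasurableSet_lt aemeasurable_const hg.1.aemeasurable.abs)).aestronglyMeasurable
    · refine .of_forall fun M => ae_of_all _ fun x => ?_
      by_cases hx : M < |g x| <;> simp [indicator, hx, sq_nonneg]
    · refine ae_of_all _ fun x => tendsto_const_nhds.congr' ?_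
      filter_upwards [eventually_ge_atTop |g x|] with M hM
      simp [indicator, not_lt.2 hM]
  obtain ⟨M, hM0, hM⟩ := ((eventually_ge_atTop 0).and (hlim.eventually (ge_mem_nhds hε))).exists
  exact ⟨M, hM0, hM⟩

lemma exists_abs_integral_mul_le [IsFiniteMeasure μ] (hg : MemLp g 2 μ) {ε : ℝ} (hε : 0 < ε) :
    ∃ M, 0 ≤ M ∧ ∀ u : α → ℝ, MemLp u 2 μ →
      |∫ x, u x * g x ∂μ| ≤ M * ∫ x, |u x| ∂μ + ε * √(∫ x, u x ^ 2 ∂μ) := by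
  obtain ⟨M, hM0, hM⟩ := exists_integral_indicator_sq_le hg (pow_pos hε 2)
  refine ⟨M, hM0, fun u hu => ?_⟩
  set S := {x | M < |g x|}
  have hS : NullMeasurableSet S μ := nullMeasurableSet_lt aemeasurable_const hg.1.aemeasurable.abs
  have htail : MemLp (S.indicator g) 2 μ :=
    hg.mono (hg.1.indicator₀ hS) (ae_of_all _ fun x => norm_indicator_le_norm_self g x)
  have htail_sq : √(∫ x, S.indicator g x ^ 2 ∂μ) ≤ ε := by
    refine Real.sqrt_le_iff.2 ⟨hε.le, le_of_eq_of_le (integral_congr_ae ?_) hM⟩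
    refine ae_of_all _ fun x => ?_
    by_cases hx : x ∈ S <;> simp [hx]
  have hpt : ∀ x, |u x * g x| ≤ M * |u x| + |u x * S.indicator g x| := by
    intro x
    by_cases hx : x ∈ S
    · simp [hx, mul_nonneg hM0 (abs_nonneg (u x))]
    · simp only [hx, not_false_eq_true, indicator_of_notMem, mul_zero, abs_zero, add_zero,
        abs_mul]
      rw [mul_comm |u x|]
      exact mul_le_mul_of_nonneg_right (not_lt.1 hx) (abs_nonneg (u x))
  have hMu : Integrable (fun x => M * |u x|) μ := (hu.integrable one_le_two).abs.const_mul M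
  have hut : Integrable (fun x => |u x * S.indicator g x|) μ := (hu.integrable_mul htail).abs
  calc |∫ x, u x * g x ∂μ| ≤ ∫ x, |u x * g x| ∂μ := abs_integral_le_integral_abs
    _ ≤ ∫ x, (M * |u x| + |u x * S.indicator g x|) ∂μ :=
        integral_mono (hu.integrable_mul hg).abs (hMu.add hut) hpt
    _ = M * ∫ x, |u x| ∂μ + ∫ x, |u x * S.indicator g x| ∂μ := by
        rw [integral_add hMu hut, integral_const_mul]
    _ ≤ M * ∫ x, |u x| ∂μ + ε * √(∫ x, u x ^ 2 ∂μ) := by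
        have := integral_abs_mul_le_sqrt_mul_sqrt hu htail
        have := mul_le_mul_of_nonneg_left htail_sq (Real.sqrt_nonneg (∫ x, u x ^ 2 ∂μ))
        linarith

lemma LipschitzWith.neg_mul_abs_le_apply_add_sub {φ : ℝ → ℝ} {K : ℝ≥0} (hφ : LipschitzWith K φ)
    (y z : ℝ) : -(K * |y|) ≤ φ (y + z) - φ z := by
  have := hφ.dist_le_mul (y + z) z
  rw [Real.dist_eq, Real.dist_eq, add_sub_cancel_right] at this
  linarith [neg_abs_le (φ (y + z) - φ z)]

lemma LipschitzWith.mul_abs_sub_le_apply_add_sub_of_coercive {φ : ℝ → ℝ} {K : ℝ≥0}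
    (hφ : LipschitzWith K φ) {a b : ℝ} (ha : 0 ≤ a) (hco : ∀ x, a * |x| - b ≤ φ x - φ 0) (y z : ℝ) :
    a * |y| - b - (a + K) * |z| ≤ φ (y + z) - φ z := by
  have hz := hφ.neg_mul_abs_le_apply_add_sub (-z) z
  rw [neg_add_cancel, abs_neg] at hz
  have hyz : |y| - |z| ≤ |y + z| := by
    simpa using abs_sub_abs_le_abs_sub y (-z)
  linarith [hco (y + z), mul_le_mul_of_nonneg_left hyz ha]

lemma setIntegral_abs_le_sqrt_mul_sqrt_measureReal [IsFiniteMeasure μ] {s : Set α}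
    (hs : MeasurableSet s) (hf : MemLp f 2 μ) :
    ∫ x in s, |f x| ∂μ ≤ √(∫ x, f x ^ 2 ∂μ) * √(μ.real s) := by
  have hind : MemLp (s.indicator (1 : α → ℝ)) 2 μ :=
    memLp_indicator_const 2 hs 1 (.inr (measure_ne_top μ s))
  have hsq : ∀ x, s.indicator (1 : α → ℝ) x ^ 2 = s.indicator 1 x := fun x => by
    by_cases hx : x ∈ s <;> simp [hx]
  have habs : ∀ x, s.indicator (fun x => |f x|) x = |f x * s.indicator 1 x| := fun x => by
    by_cases hx : x ∈ s <;> simp [hx]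
  have := integral_abs_mul_le_sqrt_mul_sqrt hf hind
  simp_rw [hsq, ← habs] at this
  rwa [integral_indicator hs, integral_indicator_one hs] at this

lemma LipschitzWith.integrable_apply_add_sub {φ : ℝ → ℝ} {K : ℝ≥0}
    (hφ : LipschitzWith K φ) {v Z : α → ℝ} (hv : Integrable v μ) (hZ : AEStronglyMeasurable Z μ) :
    Integrable (fun x => φ (v x + Z x) - φ (Z x)) μ := by
  refine Integrable.mono' (hv.abs.const_mul K) ?_ (ae_of_all _ fun x => ?_)
  · exact (hφ.continuous.comp_aestronglyMeasurable (hv.1.add hZ)).sub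
      (hφ.continuous.comp_aestronglyMeasurable hZ)
  · have := hφ.dist_le_mul (v x + Z x) (Z x)
    rwa [Real.dist_eq, Real.dist_eq, add_sub_cancel_right] at this

lemma LipschitzWith.exists_integral_apply_add_sub_ge_of_coercive [IsProbabilityMeasure μ]
    {φ : ℝ → ℝ} {K : ℝ≥0} (hφ : LipschitzWith K φ) {Z : α → ℝ} (hZ : Measurable Z) {a b : ℝ}
    (ha : 0 ≤ a)
    (hco : ∀ x, a * |x| - b ≤ φ x - φ 0) {ε : ℝ} (hε : 0 < ε) :
    ∃ C, ∀ v : α → ℝ, MemLp v 2 μ →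
      a * ∫ x, |v x| ∂μ - ε * √(∫ x, v x ^ 2 ∂μ) - C ≤ ∫ x, (φ (v x + Z x) - φ (Z x)) ∂μ := by
  have hb : 0 ≤ b := by simpa using hco 0
  set η := ε / (a + K + 1)
  have hη : (a + K) * η ≤ ε := by
    rw [mul_div_assoc', div_le_iff₀ (by positivity)]
    nlinarith
  obtain ⟨T, hT0, hT⟩ := exists_measureReal_abs_gt_le (μ := μ) hZ (by positivity : 0 < η ^ 2)
  set B := {x | T < |Z x|}
  have hB : MeasurableSet B := measurableSet_lt measurable_const hZ.abs
  refine ⟨b + (a + K) * T, fun v hv => ?_⟩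
  -- off `B` the coercivity of `φ` applies with `|Z| ≤ T`; on `B` only the Lipschitz bound
  have hpt : ∀ x, a * |v x| - (a + K) * B.indicator (fun x => |v x|) x - (b + (a + K) * T)
      ≤ φ (v x + Z x) - φ (Z x) := by
    intro x
    by_cases hx : x ∈ B
    · have := hφ.neg_mul_abs_le_apply_add_sub (v x) (Z x)
      have : 0 ≤ b + (a + K) * T := by positivity
      simp only [hx, indicator_of_mem]
      linarith
    · have := hφ.mul_abs_sub_le_apply_add_sub_of_coercive ha hco (v x) (Z x)
      have : (a + K) * |Z x| ≤ (a + K) * T := by gcongr; exact not_lt.1 hx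
      simp only [hx, not_false_eq_true, indicator_of_notMem, mul_zero, sub_zero]
      linarith
  have hB_small : (a + K) * ∫ x in B, |v x| ∂μ ≤ ε * √(∫ x, v x ^ 2 ∂μ) :=
    calc (a + K) * ∫ x in B, |v x| ∂μ ≤ (a + K) * (√(∫ x, v x ^ 2 ∂μ) * η) := by
          gcongr
          refine (setIntegral_abs_le_sqrt_mul_sqrt_measureReal hB hv).trans ?_
          gcongr
          exact Real.sqrt_le_iff.2 ⟨by positivity, hT⟩
      _ ≤ ε * √(∫ x, v x ^ 2 ∂μ) := by nlinarith [Real.sqrt_nonneg (∫ x, v x ^ 2 ∂μ)]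
  have hva : Integrable (fun x => |v x|) μ := (hv.integrable one_le_two).abs
  have hlow : Integrable (fun x => a * |v x| - (a + K) * B.indicator (fun x => |v x|) x) μ :=
    (hva.const_mul a).sub ((hva.indicator hB).const_mul _)
  calc a * ∫ x, |v x| ∂μ - ε * √(∫ x, v x ^ 2 ∂μ) - (b + (a + K) * T)
      ≤ a * ∫ x, |v x| ∂μ - (a + K) * ∫ x in B, |v x| ∂μ - (b + (a + K) * T) := by linarith
    _ = ∫ x, (a * |v x| - (a + K) * B.indicator (fun x => |v x|) x - (b + (a + K) * T)) ∂μ := by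
        rw [integral_sub hlow (integrable_const _), integral_sub (hva.const_mul a)
          ((hva.indicator hB).const_mul _), integral_const_mul, integral_const_mul,
          integral_indicator hB, integral_const, smul_eq_mul, probReal_univ, one_mul]
    _ ≤ _ := integral_mono (hlow.sub (integrable_const _))
        (hφ.integrable_apply_add_sub (hv.integrable one_le_two) hZ.aestronglyMeasurable) hpt

end SquareIntegrable

section Constraint

variable {ζ ξ : Measure ℝ} {v w : ℝ × ℝ → ℝ}

lemma sqrt_integral_projPerp_sq_le_Tfun :
    √(∫ p, projPerp ζ v p ^ 2 ∂(nu ζ)) ≤ Tfun ζ ξ v w :=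
  Real.sqrt_le_sqrt (le_add_of_nonneg_left (sq_nonneg _))

lemma hnorm_sub_evG_le_Tfun : hnorm ξ w - evG ζ v ≤ Tfun ζ ξ v w :=
  calc hnorm ξ w - evG ζ v ≤ max (hnorm ξ w - evG ζ v) 0 := le_max_left _ _
    _ = √(max (hnorm ξ w - evG ζ v) 0 ^ 2) := (Real.sqrt_sq (le_max_right _ _)).symm
    _ ≤ Tfun ζ ξ v w :=
        Real.sqrt_le_sqrt (le_add_of_nonneg_right (integral_nonneg fun _ => sq_nonneg _))

lemma Tfun_mul_sqrt_le_of_GcalR_nonpos {δ : ℝ} (hδ : 0 < δ) (hG : GcalR ζ ξ δ v w ≤ 0) :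
    Tfun ζ ξ v w * √δ ≤ ∫ q, w q * q.1 ∂(nu ξ) :=
  (le_div_iff₀ (Real.sqrt_pos.2 hδ)).1 (sub_nonpos.1 hG)

variable [IsProbabilityMeasure ζ]

instance : IsProbabilityMeasure (nu ζ) := by unfold nu; infer_instance

variable (ζ) in
lemma memLp_fst_nu : MemLp (fun p : ℝ × ℝ => p.1) 2 (nu ζ) :=
  (memLp_id_gaussianReal 2).comp_measurePreserving measurePreserving_fst

variable (ζ) in
lemma integral_fst_sq_nu : ∫ p, p.1 ^ 2 ∂(nu ζ) = 1 := by
  rw [nu, integral_fun_fst (fun x : ℝ => x ^ 2), probReal_univ, one_smul,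
    ← variance_of_integral_eq_zero aemeasurable_id' (by simp)]
  simp

lemma hnorm_le_sqrt_integral_projPerp_sq_add_abs_evG (hv : inH ζ v) :
    hnorm ζ v ≤ √(∫ p, projPerp ζ v p ^ 2 ∂(nu ζ)) + |evG ζ v| := by
  have hfst := memLp_fst_nu ζ
  have h := sqrt_integral_add_sq_le (hv.sub (hfst.const_mul (evG ζ v))) (hfst.const_mul (evG ζ v))
  rw [sqrt_integral_const_mul_sq, integral_fst_sq_nu, Real.sqrt_one, mul_one] at h
  simpa [hnorm, projPerp] using h

end Constraint

lemma exists_hnorm_add_hnorm_le_of_GcalR_nonpos (ζ ξ : Measure ℝ) [IsProbabilityMeasure ζ]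
    [IsProbabilityMeasure ξ] {δ : ℝ} (hδ : 0 < δ) :
    ∃ A, 0 < A ∧ ∀ v w : ℝ × ℝ → ℝ, inH ζ v → inH ξ w → GcalR ζ ξ δ v w ≤ 0 →
      hnorm ζ v + hnorm ξ w ≤ A * (∫ p, |v p| ∂(nu ζ) + ∫ q, |w q| ∂(nu ξ)) := by
  have hs : 0 < √δ := Real.sqrt_pos.2 hδ
  obtain ⟨M₁, hM₁, hG⟩ := exists_abs_integral_mul_le (memLp_fst_nu ζ) (ε := 1 / 4) (by norm_num)
  obtain ⟨M₂, hM₂, hH⟩ := exists_abs_integral_mul_le (memLp_fst_nu ξ) (ε := √δ / 4) (by positivity)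
  refine ⟨4 * (M₁ + M₂ / √δ) + 1, by positivity, fun v w hv hw hGcal => ?_⟩
  set Ev := ∫ p, |v p| ∂(nu ζ)
  set Ew := ∫ q, |w q| ∂(nu ξ)
  have hvG : |evG ζ v| ≤ M₁ * Ev + 1 / 4 * hnorm ζ v := hG v hv
  have hwH : |∫ q, w q * q.1 ∂(nu ξ)| ≤ M₂ * Ew + √δ / 4 * hnorm ξ w := hH w hw
  have hT : Tfun ζ ξ v w ≤ M₂ / √δ * Ew + hnorm ξ w / 4 := by
    refine le_of_mul_le_mul_right ?_ hs
    calc Tfun ζ ξ v w * √δ ≤ M₂ * Ew + √δ / 4 * hnorm ξ w :=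
          (Tfun_mul_sqrt_le_of_GcalR_nonpos hδ hGcal).trans ((le_abs_self _).trans hwH)
      _ = (M₂ / √δ * Ew + hnorm ξ w / 4) * √δ := by field_simp
  have hv_le := hnorm_le_sqrt_integral_projPerp_sq_add_abs_evG hv
  have hP : √(∫ p, projPerp ζ v p ^ 2 ∂(nu ζ)) ≤ Tfun ζ ξ v w :=
    sqrt_integral_projPerp_sq_le_Tfun
  have hw_le : hnorm ξ w - evG ζ v ≤ Tfun ζ ξ v w := hnorm_sub_evG_le_Tfun
  have hEv : 0 ≤ Ev := integral_nonneg fun _ => abs_nonneg _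
  have hEw : 0 ≤ Ew := integral_nonneg fun _ => abs_nonneg _
  linarith [le_abs_self (evG ζ v), mul_nonneg (by positivity : 0 ≤ M₂ / √δ) hEv,
    mul_nonneg hM₁ hEw]

theorem stmt19_general (ζ ξ : Measure ℝ) [IsProbabilityMeasure ζ] [IsProbabilityMeasure ξ]
    (loss reg : ℝ → ℝ) (δ : ℝ) (hδ : 0 < δ)
    (hlipL : LipschitzFun loss)
    (hlipR : LipschitzFun reg)
    (aLoss bLoss aReg bReg : ℝ)
    (haL : 0 < aLoss) (haR : 0 < aReg)
    (hcoL : ∀ x : ℝ, aLoss * |x| - bLoss ≤ loss x - loss 0)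
    (hcoR : ∀ x : ℝ, aReg * |x| - bReg ≤ reg x - reg 0) :
    ∃ C₁ C₂ : ℝ, 0 < C₁ ∧ 0 < C₂ ∧
      ∀ v w : ℝ × ℝ → ℝ, inH ζ v → inH ξ w → GcalR ζ ξ δ v w ≤ 0 →
        C₁ * (hnorm ζ v + hnorm ξ w) - C₂ ≤ LcalR ζ ξ loss reg δ v w := by
  obtain ⟨KL, hKL⟩ := hlipL
  obtain ⟨KR, hKR⟩ := hlipR
  obtain ⟨A, hA, hnorm_bound⟩ := exists_hnorm_add_hnorm_le_of_GcalR_nonpos ζ ξ hδ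
  -- chosen so that the errors `κ ‖·‖` are absorbed by `4 A κ (E|v| + E|w|) ≥ 4 κ (‖v‖ + ‖w‖)`
  set κ := min (δ * aLoss) aReg / (4 * A)
  have hκ : 0 < κ := by positivity
  have hκL : 4 * A * κ ≤ δ * aLoss := by
    rw [mul_div_cancel₀ _ (by positivity)]
    exact min_le_left _ _
  have hκR : 4 * A * κ ≤ aReg := by
    rw [mul_div_cancel₀ _ (by positivity)]
    exact min_le_right _ _
  obtain ⟨CL, hCL⟩ :=
    hKL.exists_integral_apply_add_sub_ge_of_coercive (μ := nu ζ) measurable_snd haL.le hcoL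
      (div_pos hκ hδ)
  obtain ⟨CR, hCR⟩ :=
    hKR.exists_integral_apply_add_sub_ge_of_coercive (μ := nu ξ) measurable_snd haR.le hcoR hκ
  refine ⟨3 * κ, max (δ * CL + CR) 1, by positivity, by positivity, fun v w hv hw hG => ?_⟩
  set Ev := ∫ p, |v p| ∂(nu ζ)
  set Ew := ∫ q, |w q| ∂(nu ξ)
  have hN : 4 * κ * (hnorm ζ v + hnorm ξ w) ≤ 4 * κ * (A * (Ev + Ew)) :=
    mul_le_mul_of_nonneg_left (hnorm_bound v w hv hw hG) (by positivity)
  have hL : δ * aLoss * Ev - κ * hnorm ζ v - δ * CL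
      ≤ δ * ∫ p, (loss (v p + p.2) - loss p.2) ∂(nu ζ) :=
    calc _ = δ * (aLoss * Ev - κ / δ * hnorm ζ v - CL) := by field_simp
      _ ≤ _ := mul_le_mul_of_nonneg_left (hCL v hv) hδ.le
  have hR : aReg * Ew - κ * hnorm ξ w - CR ≤ ∫ q, (reg (w q + q.2) - reg q.2) ∂(nu ξ) := hCR w hw
  have hκEv : 4 * A * κ * Ev ≤ δ * aLoss * Ev :=
    mul_le_mul_of_nonneg_right hκL (integral_nonneg fun _ => abs_nonneg _)
  have hκEw : 4 * A * κ * Ew ≤ aReg * Ew :=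
    mul_le_mul_of_nonneg_right hκR (integral_nonneg fun _ => abs_nonneg _)
  unfold LcalR
  linarith [le_max_left (δ * CL + CR) 1]

/-- coercivity of `Lcal` on the constraint set `{Gcal(v,w) ≤ 0}` when `loss` and
`reg` are coercive. -/
theorem stmt19 (ζ ξ : Measure ℝ) [IsProbabilityMeasure ζ] [IsProbabilityMeasure ξ]
    (loss reg : ℝ → ℝ) (δ : ℝ) (hδ : 0 < δ)
    (hconvL : ConvexOn ℝ Set.univ loss) (hlipL : LipschitzFun loss)
    (hconvR : ConvexOn ℝ Set.univ reg) (hlipR : LipschitzFun reg)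
    (aLoss bLoss aReg bReg : ℝ)
    (haL : 0 < aLoss) (hbL : 0 ≤ bLoss) (haR : 0 < aReg) (hbR : 0 ≤ bReg)
    (hcoL : ∀ x : ℝ, aLoss * |x| - bLoss ≤ loss x - loss 0)
    (hcoR : ∀ x : ℝ, aReg * |x| - bReg ≤ reg x - reg 0) :
    ∃ C₁ C₂ : ℝ, 0 < C₁ ∧ 0 < C₂ ∧
      ∀ v w : ℝ × ℝ → ℝ, inH ζ v → inH ξ w → GcalR ζ ξ δ v w ≤ 0 →
        C₁ * (hnorm ζ v + hnorm ξ w) - C₂ ≤ LcalR ζ ξ loss reg δ v w :=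
  stmt19_general ζ ξ loss reg δ hδ hlipL hlipR aLoss bLoss aReg bReg haL haR hcoL hcoR
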